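/- Let α, β ∈ ℝ with α > 0, β ≥ 0, and let N : [0,∞) → ℝ be continuous and nonnegative. If N(t) ≥ c·(1+t)^{−β} for some c > 0 and all t ≥ T₁ ≥ 0, and β < 2, then ∫₀ᵗ (1+s)^{−μ} ∫₀ˢ (1+τ)^μ N(τ) dτ ds ≥ C (1+t)^{2−β} for some C > 0 and all t large enough (for any fixed μ > 0). -/

import Mathlib

/-!
On `[t/2, t]` the base `1 + x` stays within a factor two of `1 + t`, so a lower bound
`F x ≥ c (1 + x)^p` for large `x` integrates to `∫₀ᵗ F ≥ C (1 + t)^(p + 1)`, the part of the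
integral over `[0, t/2]` being nonnegative. Applied to `F τ = (1 + τ)^μ N τ` with `p = μ - β`,
this bounds the inner integral below by `C₁ (1 + s)^(μ - β + 1)`; after multiplication by
`(1 + s)^(-μ)` it applies once more with `p = 1 - β`.
-/

open MeasureTheory intervalIntegral Set Filter

lemma two_rpow_neg_abs_mul_rpow_le {y z : ℝ} (p : ℝ) (hz : 0 < z) (hzy : z / 2 ≤ y)
    (hyz : y ≤ z) : 2 ^ (-|p|) * z ^ p ≤ y ^ p := by
  rcases le_or_gt 0 p with hp | hp
  · calc 2 ^ (-|p|) * z ^ p = (z / 2) ^ p := by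
          rw [abs_of_nonneg hp, Real.rpow_neg zero_le_two, Real.div_rpow hz.le zero_le_two]
          ring
      _ ≤ y ^ p := Real.rpow_le_rpow (by positivity) hzy hp
  · calc 2 ^ (-|p|) * z ^ p ≤ 1 * z ^ p := by
          gcongr
          exact Real.rpow_le_one_of_one_le_of_nonpos one_le_two (neg_nonpos.2 (abs_nonneg p))
      _ ≤ y ^ p := by
          rw [one_mul]
          exact Real.rpow_le_rpow_of_nonpos (by linarith) hyz hp.le

lemma sub_mul_le_integral_of_nonneg_of_le {f : ℝ → ℝ} {a m b L : ℝ} (ham : a ≤ m)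
    (hmb : m ≤ b) (hf : IntervalIntegrable f volume a b) (hf₀ : ∀ x ∈ Icc a m, 0 ≤ f x)
    (hL : ∀ x ∈ Icc m b, L ≤ f x) : (b - m) * L ≤ ∫ x in a..b, f x := by
  have hfam : IntervalIntegrable f volume a m := hf.mono_set <| by
    rw [uIcc_of_le ham, uIcc_of_le (ham.trans hmb)]
    exact Icc_subset_Icc_right hmb
  have hfmb : IntervalIntegrable f volume m b := hf.mono_set <| by
    rw [uIcc_of_le hmb, uIcc_of_le (ham.trans hmb)]
    exact Icc_subset_Icc_left ham
  rw [← integral_add_adjacent_intervals hfam hfmb]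
  have hhead : 0 ≤ ∫ x in a..m, f x := integral_nonneg ham hf₀
  have htail : (b - m) * L ≤ ∫ x in m..b, f x := by
    simpa using integral_mono_on hmb intervalIntegrable_const hfmb hL
  linarith

theorem exists_mul_one_add_rpow_le_integral {F : ℝ → ℝ} {c p : ℝ} (hc : 0 < c)
    (hF : ContinuousOn F (Ici 0)) (hF₀ : ∀ x, 0 ≤ x → 0 ≤ F x)
    (hlow : ∀ᶠ x in atTop, c * (1 + x) ^ p ≤ F x) :
    ∃ C > 0, ∀ᶠ t in atTop, C * (1 + t) ^ (p + 1) ≤ ∫ x in 0..t, F x := by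
  obtain ⟨T, hT⟩ := eventually_atTop.1 hlow
  refine ⟨c * 2 ^ (-|p|) / 4, by positivity, eventually_atTop.2 ⟨max 1 (2 * T), fun t ht ↦ ?_⟩⟩
  have ht₁ : 1 ≤ t := le_of_max_le_left ht
  have htT : T ≤ t / 2 := by linarith [le_of_max_le_right ht]
  have hpos : 0 < 1 + t := by linarith
  set L := c * 2 ^ (-|p|) * (1 + t) ^ p
  have hL : ∀ x ∈ Icc (t / 2) t, L ≤ F x := fun x hx ↦
    calc L = c * (2 ^ (-|p|) * (1 + t) ^ p) := mul_assoc _ _ _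
      _ ≤ c * (1 + x) ^ p := by
          gcongr
          exact two_rpow_neg_abs_mul_rpow_le p hpos (by linarith [hx.1]) (by linarith [hx.2])
      _ ≤ F x := hT x (htT.trans hx.1)
  have hL₀ : 0 ≤ L := by have := Real.rpow_pos_of_pos hpos p; positivity
  calc c * 2 ^ (-|p|) / 4 * (1 + t) ^ (p + 1) = (1 + t) / 4 * L := by
        rw [Real.rpow_add_one hpos.ne']
        ring
    _ ≤ (t - t / 2) * L := by gcongr; linarith
    _ ≤ ∫ x in 0..t, F x :=
        sub_mul_le_integral_of_nonneg_of_le (by linarith) (by linarith)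
          ((hF.mono Icc_subset_Ici_self).intervalIntegrable_of_Icc (by linarith))
          (fun x hx ↦ hF₀ x hx.1) hL

lemma continuousOn_primitive_Ici {f : ℝ → ℝ} {a : ℝ} (hf : ContinuousOn f (Ici a)) :
    ContinuousOn (fun s ↦ ∫ τ in a..s, f τ) (Ici a) := fun x hx ↦ by
  have hax : a ≤ x := hx
  have hprim := continuousOn_primitive_interval' (μ := volume)
    ((hf.mono Icc_subset_Ici_self).intervalIntegrable_of_Icc (by linarith : a ≤ x + 1))
    left_mem_uIcc
  rw [uIcc_of_le (by linarith)] at hprim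
  exact (hprim x ⟨hax, by linarith⟩).mono_of_mem_nhdsWithin
    (inter_mem_nhdsWithin (Ici a) (Iic_mem_nhds (by linarith)))

lemma continuousOn_one_add_rpow (p : ℝ) : ContinuousOn (fun x : ℝ ↦ (1 + x) ^ p) (Ici 0) :=
  (continuousOn_const.add continuousOn_id).rpow_const fun x hx ↦
    Or.inl (by linarith [mem_Ici.1 hx] : (0 : ℝ) < 1 + x).ne'

lemma eventually_mul_one_add_rpow_le_rpow_mul {G : ℝ → ℝ} {c q : ℝ} (ν : ℝ)
    (hG : ∀ᶠ x in atTop, c * (1 + x) ^ q ≤ G x) :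
    ∀ᶠ x in atTop, c * (1 + x) ^ (ν + q) ≤ (1 + x) ^ ν * G x := by
  filter_upwards [eventually_ge_atTop 0, hG] with x hx₀ hx
  calc c * (1 + x) ^ (ν + q) = (1 + x) ^ ν * (c * (1 + x) ^ q) := by
        rw [Real.rpow_add (by linarith)]
        ring
    _ ≤ (1 + x) ^ ν * G x := mul_le_mul_of_nonneg_left hx (Real.rpow_nonneg (by linarith) _)

theorem double_integral_growth_general (μ β c T₁ : ℝ) (hc : 0 < c)
    (Nf : ℝ → ℝ) (hNc : Continuous Nf) (hNpos : ∀ t : ℝ, 0 ≤ t → 0 ≤ Nf t)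
    (hlow : ∀ t : ℝ, T₁ ≤ t → c * (1 + t) ^ (-β) ≤ Nf t) :
    ∃ C > (0 : ℝ), ∃ T : ℝ, ∀ t : ℝ, T ≤ t →
      C * (1 + t) ^ (2 - β)
        ≤ ∫ s in (0 : ℝ)..t, (1 + s) ^ (-μ) * ∫ τ in (0 : ℝ)..s, (1 + τ) ^ μ * Nf τ := by
  have hf : ContinuousOn (fun τ ↦ (1 + τ) ^ μ * Nf τ) (Ici 0) :=
    (continuousOn_one_add_rpow μ).mul hNc.continuousOn
  have hf₀ : ∀ τ, 0 ≤ τ → 0 ≤ (1 + τ) ^ μ * Nf τ := fun τ hτ ↦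
    mul_nonneg (Real.rpow_nonneg (by linarith) _) (hNpos τ hτ)
  obtain ⟨C₁, hC₁, hinner⟩ := exists_mul_one_add_rpow_le_integral hc hf hf₀
    (eventually_mul_one_add_rpow_le_rpow_mul μ (eventually_atTop.2 ⟨T₁, hlow⟩))
  have hh₀ : ∀ s, 0 ≤ s → 0 ≤ (1 + s) ^ (-μ) * ∫ τ in (0 : ℝ)..s, (1 + τ) ^ μ * Nf τ :=
    fun s hs ↦ mul_nonneg (Real.rpow_nonneg (by linarith) _)
      (integral_nonneg hs fun τ hτ ↦ hf₀ τ hτ.1)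
  obtain ⟨C₂, hC₂, houter⟩ := exists_mul_one_add_rpow_le_integral hC₁
    ((continuousOn_one_add_rpow (-μ)).mul (continuousOn_primitive_Ici hf)) hh₀
    (eventually_mul_one_add_rpow_le_rpow_mul (-μ) hinner)
  obtain ⟨T, hT⟩ := eventually_atTop.1 houter
  refine ⟨C₂, hC₂, T, fun t ht ↦ ?_⟩
  rw [show 2 - β = -μ + (μ + -β + 1) + 1 by ring]
  exact hT t ht

/-- If `N(t) ≥ c(1+t)^{-β}` for `t ≥ T₁` with `0 ≤ β < 2`, then the double
integral `∫₀ᵗ (1+s)^{-μ} ∫₀ˢ (1+τ)^μ N(τ) dτ ds` grows at least like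
`C(1+t)^{2-β}` for large `t`. -/
theorem double_integral_growth (μ β c T₁ : ℝ) (hμ : 0 < μ)
    (hβ0 : 0 ≤ β) (hβ2 : β < 2) (hc : 0 < c) (hT₁ : 0 ≤ T₁)
    (Nf : ℝ → ℝ) (hNc : Continuous Nf) (hNpos : ∀ t : ℝ, 0 ≤ t → 0 ≤ Nf t)
    (hlow : ∀ t : ℝ, T₁ ≤ t → c * (1 + t) ^ (-β) ≤ Nf t) :
    ∃ C > (0 : ℝ), ∃ T : ℝ, ∀ t : ℝ, T ≤ t →
      C * (1 + t) ^ (2 - β)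
        ≤ ∫ s in (0 : ℝ)..t, (1 + s) ^ (-μ) * ∫ τ in (0 : ℝ)..s, (1 + τ) ^ μ * Nf τ :=
  double_integral_growth_general μ β c T₁ hc Nf hNc hNpos hlow
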